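/- arXiv:1401.1448 — 3 statements merged into one kernel-verified Lean document; each statement's English description precedes it below -/
import Mathlib

section
/- For functions f,g : A* → ℕ∪{∞}, define f ≼ g iff for every set W ⊆ A*, if g is bounded on W then f is bounded on W. Then f ≼ g if and only if there exists a monotone-extendable correction function α : ℕ → ℕ (extended by α(∞)=∞) such that f ≤ α ∘ g. -/
/-! Every set on which `g` is bounded lies in a sublevel set `{g ≤ n}`, on which `g` is bounded,
so `f ≼ g` amounts to a bound `N n` for `f` on each `{g ≤ n}`; the running maximum of `N` is
a monotone correction function. Conversely a monotone `α` bounds `f` by `α N` wherever `g < N`. -/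

/-- `f` is bounded on `W` by some natural number (so `∞` never occurs on `W`). -/
def BoundedOn {A : Type*} (f : List A → ℕ∞) (W : Set (List A)) : Prop :=
  ∃ N : ℕ, ∀ u ∈ W, f u < (N : ℕ∞)

/-- `f ≼ g` : every set on which `g` is bounded is a set on which `f` is bounded. -/
def CostLE {A : Type*} (f g : List A → ℕ∞) : Prop :=
  ∀ W : Set (List A), BoundedOn g W → BoundedOn f W

section

variable {A : Type*}

lemma ENat.map_le_of_lt {α : ℕ → ℕ} (hα : Monotone α) {x : ℕ∞} {N : ℕ} (hx : x < N) :
    x.map α ≤ (α N : WithTop ℕ) := by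
  lift x to ℕ using hx.ne_top
  exact WithTop.coe_le_coe.mpr (hα (by exact_mod_cast hx.le))

lemma BoundedOn.sublevel (g : List A → ℕ∞) (n : ℕ) : BoundedOn g {u | g u ≤ n} :=
  ⟨n + 1, fun _ hu => hu.trans_lt (by exact_mod_cast n.lt_succ_self)⟩

lemma CostLE.exists_correction {f g : List A → ℕ∞} (h : CostLE f g) :
    ∃ α : ℕ → ℕ, Monotone α ∧ ∀ u, f u ≤ (g u).map α := by
  choose N hN using fun n : ℕ => h _ (BoundedOn.sublevel g n)
  refine ⟨partialSups N, (partialSups N).monotone, fun u => ?_⟩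
  cases hgu : g u with
  | top => exact le_top
  | coe n =>
    exact (hN n u (by simp [hgu])).le.trans (WithTop.coe_le_coe.mpr (le_partialSups N n))

lemma costLE_of_le_map {f g : List A → ℕ∞} {α : ℕ → ℕ} (hα : Monotone α)
    (hle : ∀ u, f u ≤ (g u).map α) : CostLE f g := by
  rintro W ⟨N, hN⟩
  refine ⟨α N + 1, fun u hu => ?_⟩
  exact (hle u).trans_lt <| (ENat.map_le_of_lt hα (hN u hu)).trans_lt <|
    WithTop.coe_lt_coe.mpr (α N).lt_succ_self

end

/-- `f ≼ g` iff there is a (monotone-extendable) correction function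
`α : ℕ → ℕ` (extended by `α(∞) = ∞`, i.e. `WithTop.map`) with `f ≤ α ∘ g`. -/
theorem costLE_iff_exists_correction {A : Type*} (f g : List A → ℕ∞) :
    CostLE f g ↔ ∃ α : ℕ → ℕ, Monotone α ∧ ∀ u : List A, f u ≤ (g u).map α :=
  ⟨CostLE.exists_correction, fun ⟨_, hα, hle⟩ => costLE_of_le_map hα hle⟩
end

section
/- A sequence a ∈ E^ℕ is α-non-decreasing (i.e. a ≼_α a) for some correction function α if and only if it is ∼-equivalent (for some correction function) to a non-decreasing sequence. -/
/-!
Given a correction function `α`, sample `a` along `c 0 = 0`, `c (n+1) = max (c n + 1) (α (c n))`.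
Each step of `c` is long enough for `α` to apply, so `a ∘ c` is non-decreasing, and `a ∘ c`
is `∼`-equivalent to `a` once `m` is at least `n`, `α n`, `c n` and `α (c n)`. Conversely, if
`a ∼_β b` with `b` monotone, then `a n ≤ b (β n) ≤ a m` as soon as `β (β n) ≤ m`.
-/

theorem exists_strictMono_map_le_succ (f : ℕ → ℕ) :
    ∃ c : ℕ → ℕ, StrictMono c ∧ ∀ n, f (c n) ≤ c (n + 1) := by
  let c : ℕ → ℕ := fun n => Nat.rec 0 (fun _ k => max (k + 1) (f k)) n
  have hc : ∀ n, c (n + 1) = max (c n + 1) (f (c n)) := fun _ => rfl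
  refine ⟨c, strictMono_nat_of_lt_succ fun n => ?_, fun n => ?_⟩ <;> rw [hc]
  · exact Nat.lt_of_lt_of_le (Nat.lt_succ_self _) (le_max_left _ _)
  · exact le_max_right _ _

section CorrectedMonotone

variable {E : Type*} [Preorder E] {a : ℕ → E} {α c : ℕ → ℕ}

theorem monotone_comp_of_correction (hα : ∀ n m, n ≤ m → α n ≤ m → a n ≤ a m)
    (hc : StrictMono c) (hstep : ∀ n, α (c n) ≤ c (n + 1)) : Monotone (a ∘ c) :=
  monotone_nat_of_le_succ fun n => hα _ _ (hc (Nat.lt_succ_self n)).le (hstep n)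

theorem le_comp_of_correction (hα : ∀ n m, n ≤ m → α n ≤ m → a n ≤ a m)
    (hc : StrictMono c) {n m : ℕ} (hm : max n (α n) ≤ m) : a n ≤ a (c m) :=
  hα _ _ ((le_of_max_le_left hm).trans (hc.id_le m))
    ((le_of_max_le_right hm).trans (hc.id_le m))

end CorrectedMonotone

/-- a sequence `a : ℕ → E` is `α`-non-decreasing for some correction
function `α` (i.e. `a(n) ≤ a(m)` whenever `n ≤ m` and `α(n) ≤ m`) iff it is
`∼_β`-equivalent, for some correction function `β`, to a non-decreasing sequence. -/
theorem alpha_nondecreasing_iff_sim_monotone {E : Type*} [Preorder E] (a : ℕ → E) :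
    (∃ α : ℕ → ℕ, ∀ n m : ℕ, n ≤ m → α n ≤ m → a n ≤ a m) ↔
    (∃ (β : ℕ → ℕ) (b : ℕ → E), Monotone b ∧
      (∀ n m : ℕ, β n ≤ m → a n ≤ b m) ∧ (∀ n m : ℕ, β n ≤ m → b n ≤ a m)) := by
  constructor
  · rintro ⟨α, hα⟩
    obtain ⟨c, hc, hstep⟩ := exists_strictMono_map_le_succ α
    refine ⟨fun n => max (max n (α n)) (max (c n) (α (c n))), a ∘ c,
      monotone_comp_of_correction hα hc hstep, fun n m hm => ?_, fun n m hm => ?_⟩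
    · exact le_comp_of_correction hα hc (le_of_max_le_left hm)
    · have hm' : max (c n) (α (c n)) ≤ m := le_of_max_le_right hm
      exact hα _ _ (le_of_max_le_left hm') (le_of_max_le_right hm')
  · rintro ⟨β, b, -, hab, hba⟩
    exact ⟨fun n => β (β n), fun n m _ hm => (hab n (β n) le_rfl).trans (hba (β n) m hm)⟩
end

section
/- Let M be an aperiodic finite stabilization monoid and b ∈ M with b ≠ 1. Define M' = Mb ∩ bM with product xb ∘ by = xby. Then M' is a monoid with neutral element b, M' is aperiodic, 1 ∉ M', and |M'| < |M|. -/
open Classical in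
/-- The local divisor product: `xb ∘ by = xby`.  For `u ∈ Mb` and `v ∈ bM` this is
well defined and given by `circ b u v = x * v` where `u = x * b`. -/
noncomputable def circ {M : Type*} [Monoid M] (b u v : M) : M :=
  if h : ∃ x, u = x * b then Classical.choose h * v else u * v

/-- Powers with respect to `circ`: `cpow b u n = u^{∘(n+1)}`. -/
noncomputable def cpow {M : Type*} [Monoid M] (b u : M) : ℕ → M
  | 0 => u
  | n + 1 => circ b (cpow b u n) u

/-!
Every computation in `M' = Mb ∩ bM` is done on representatives: `xb ∘ by = xby`, so `b` is
neutral, associativity is that of `M`, and the `∘`-powers of `u = xb` are `x ^ n * u`, whence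
`M'` inherits aperiodicity. If `1 ∈ M'`, then `1 = xb = by` makes `b` a unit, and the only
unit of an aperiodic monoid is `1`; so `M'` misses `1`, which also gives `|M'| < |M|`.
-/

section LocalDivisor

variable {M : Type*} [Monoid M]

def localDivisorSet (b : M) : Set M := {m | (∃ x, m = x * b) ∧ ∃ y, m = b * y}

theorem circ_eq (b u v x y : M) (hu : u = x * b) (hv : v = b * y) :
    circ b u v = x * b * y := by
  subst hu hv
  have h : ∃ x', x * b = x' * b := ⟨x, rfl⟩
  rw [circ, dif_pos h, ← mul_assoc, ← Classical.choose_spec h]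

variable {b : M}

theorem circ_mem_localDivisorSet {u v : M} (hu : u ∈ localDivisorSet b)
    (hv : v ∈ localDivisorSet b) : circ b u v ∈ localDivisorSet b := by
  obtain ⟨⟨x, hx⟩, ⟨y', hy'⟩⟩ := hu
  obtain ⟨⟨x', hx'⟩, ⟨y, hy⟩⟩ := hv
  rw [circ_eq b u v x y hx hy]
  exact ⟨⟨x * x', by rw [mul_assoc, ← hy, hx', ← mul_assoc]⟩,
    ⟨y' * y, by rw [← hx, hy', mul_assoc]⟩⟩

theorem self_mem_localDivisorSet (b : M) : b ∈ localDivisorSet b :=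
  ⟨⟨1, (one_mul b).symm⟩, ⟨1, (mul_one b).symm⟩⟩

theorem circ_self_left {u : M} (hu : u ∈ localDivisorSet b) : circ b b u = u := by
  obtain ⟨-, ⟨y, hy⟩⟩ := hu
  rw [circ_eq b b u 1 y (one_mul b).symm hy, one_mul, hy]

theorem circ_self_right {u : M} (hu : u ∈ localDivisorSet b) : circ b u b = u := by
  obtain ⟨⟨x, hx⟩, -⟩ := hu
  rw [circ_eq b u b x 1 hx (mul_one b).symm, mul_one, hx]

theorem circ_assoc {u v w : M} (hu : u ∈ localDivisorSet b) (hv : v ∈ localDivisorSet b)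
    (hw : w ∈ localDivisorSet b) : circ b (circ b u v) w = circ b u (circ b v w) := by
  obtain ⟨⟨x, hx⟩, -⟩ := hu
  obtain ⟨⟨x', hx'⟩, ⟨y, hy⟩⟩ := hv
  obtain ⟨-, ⟨z, hz⟩⟩ := hw
  have huv : circ b u v = x * x' * b := by
    rw [circ_eq b u v x y hx hy, mul_assoc, ← hy, hx', ← mul_assoc]
  have hvw : circ b v w = b * (y * z) := by
    rw [circ_eq b v w x' z hx' hz, ← hx', hy, mul_assoc]
  rw [circ_eq b _ w (x * x') z huv hz, circ_eq b u _ x (y * z) hx hvw,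
    mul_assoc x x' b, ← hx', hy]
  simp only [mul_assoc]

theorem cpow_eq_pow_mul {u x y : M} (hx : u = x * b) (hy : u = b * y) (n : ℕ) :
    cpow b u n = x ^ n * u := by
  induction n with
  | zero => simp [cpow]
  | succ n ih =>
    have hn : cpow b u n = x ^ n * x * b := by rw [ih, hx, mul_assoc]
    rw [cpow, circ_eq b _ u _ y hn hy, mul_assoc, ← hy, pow_succ]

theorem cpow_succ_eq_cpow {k : ℕ} (hap : ∀ m : M, m ^ (k + 1) = m ^ k) {u : M}
    (hu : u ∈ localDivisorSet b) : cpow b u (k + 1) = cpow b u k := by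
  obtain ⟨⟨x, hx⟩, ⟨y, hy⟩⟩ := hu
  rw [cpow_eq_pow_mul hx hy, cpow_eq_pow_mul hx hy, hap]

theorem IsUnit.eq_one_of_pow_succ_eq_pow {m : M} (hm : IsUnit m) {k : ℕ}
    (h : m ^ (k + 1) = m ^ k) : m = 1 :=
  (hm.pow k).mul_left_cancel (by rw [← pow_succ, mul_one, h])

theorem isUnit_of_one_mem_localDivisorSet (h : (1 : M) ∈ localDivisorSet b) : IsUnit b := by
  obtain ⟨⟨x, hx⟩, ⟨y, hy⟩⟩ := h
  obtain rfl : x = y := left_inv_eq_right_inv hx.symm hy.symm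
  exact isUnit_iff_exists.2 ⟨x, hy.symm, hx.symm⟩

theorem one_notMem_localDivisorSet (hb : b ≠ 1) {k : ℕ} (hap : b ^ (k + 1) = b ^ k) :
    (1 : M) ∉ localDivisorSet b :=
  fun h => hb ((isUnit_of_one_mem_localDivisorSet h).eq_one_of_pow_succ_eq_pow hap)

end LocalDivisor


/-- let `M` be a finite aperiodic monoid and `b ≠ 1`.  Then
`M' = Mb ∩ bM` with product `xb ∘ by = xby` is a monoid with neutral element `b`
(the product is well defined, `M'` is closed under it and it is associative on
`M'`), `M'` is aperiodic, `1 ∉ M'`, and `|M'| < |M|`. -/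
theorem local_divisor_monoid {M : Type*} [Monoid M] [Finite M] (k : ℕ)
    (hap : ∀ m : M, m ^ (k + 1) = m ^ k) (b : M) (hb : b ≠ 1) :
    let M' : Set M := {m | (∃ x, m = x * b) ∧ ∃ y, m = b * y}
    -- the product is well defined: `xb ∘ by = xby`
    (∀ u v x y : M, u = x * b → v = b * y → circ b u v = x * b * y) ∧
    -- `M'` is closed under the product
    (∀ u ∈ M', ∀ v ∈ M', circ b u v ∈ M') ∧
    -- `b ∈ M'` is a neutral element
    b ∈ M' ∧ (∀ u ∈ M', circ b b u = u ∧ circ b u b = u) ∧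
    -- associativity on `M'`
    (∀ u ∈ M', ∀ v ∈ M', ∀ w ∈ M', circ b (circ b u v) w = circ b u (circ b v w)) ∧
    -- `M'` is aperiodic
    (∃ k' : ℕ, ∀ u ∈ M', cpow b u (k' + 1) = cpow b u k') ∧
    -- `1 ∉ M'` and `|M'| < |M|`
    (1 : M) ∉ M' ∧ Nat.card M' < Nat.card M := by
  intro M'
  have h1 : (1 : M) ∉ M' := one_notMem_localDivisorSet hb (hap b)
  exact ⟨circ_eq b, fun _ hu _ hv => circ_mem_localDivisorSet hu hv, self_mem_localDivisorSet b,
    fun _ hu => ⟨circ_self_left hu, circ_self_right hu⟩,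
    fun _ hu _ hv _ hw => circ_assoc hu hv hw, ⟨k, fun _ hu => cpow_succ_eq_cpow hap hu⟩,
    h1, Finite.card_subtype_lt h1⟩
end
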